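/- arXiv:1404.4702 — 2 statements merged into one kernel-verified Lean document; each statement's English description precedes it below -/
import Mathlib

section
/- Every submodular function f: {0,1}^n → [0,1] is 2-self-bounding; that is, for every x ∈ {0,1}^n and i ∈ [n], f(x) − min(f(x_{i←0}), f(x_{i←1})) ≤ 1, and Σ_{i=1}^n (f(x) − min(f(x_{i←0}), f(x_{i←1}))) ≤ 2·f(x). -/
/-!
Since `f x - min (f x₀) (f x₁) ≤ (f x - f x₀)⁺ + (f x - f x₁)⁺` with `x_b = x_{i←b}`, it suffices
to bound, for each `b`, the sum over `i` of the positive parts of the drops `f x - f x_{i←b}` by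
`f x`. By submodularity the drops over any set `S` of coordinates add up to at most
`f x - f y`, where `y` is `x` with every coordinate of `S` set to `b`; taking for `S` the
coordinates with positive drop and using `f y ≥ 0` gives the bound.
-/

noncomputable section

/-- A function `f : {0,1}^n → ℝ` is `a`-self-bounding. -/
def SelfBounding (n : ℕ) (a : ℝ) (f : (Fin n → Bool) → ℝ) : Prop :=
  ∀ x : Fin n → Bool,
    (∀ i : Fin n,
      f x - min (f (Function.update x i false)) (f (Function.update x i true)) ≤ 1) ∧
    ∑ i : Fin n,
      (f x - min (f (Function.update x i false)) (f (Function.update x i true))) ≤ a * f x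

open Finset Function

def IsSubmodular {α : Type*} [Lattice α] (f : α → ℝ) : Prop :=
  ∀ x y, f (x ⊔ y) + f (x ⊓ y) ≤ f x + f y

theorem IsSubmodular.comp_compl {α : Type*} [BooleanAlgebra α] {f : α → ℝ}
    (hf : IsSubmodular f) : IsSubmodular (f ∘ compl) := fun x y => by
  simpa only [comp_apply, compl_sup, compl_inf, add_comm] using hf xᶜ yᶜ

theorem Finset.sum_posPart_eq_sum_filter {ι α : Type*} [AddCommGroup α] [LinearOrder α]
    (s : Finset ι) (g : ι → α) :
    ∑ i ∈ s, (g i)⁺ = ∑ i ∈ s with 0 < g i, g i := by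
  rw [sum_filter]
  refine sum_congr rfl fun i _ => ?_
  split_ifs with h
  · exact posPart_of_nonneg h.le
  · exact posPart_of_nonpos (not_lt.mp h)

theorem sub_min_le_posPart_add_posPart {α : Type*} [AddCommGroup α] [LinearOrder α]
    [IsOrderedAddMonoid α] (a b c : α) : a - min b c ≤ (a - b)⁺ + (a - c)⁺ := by
  rw [← max_sub_sub_left]
  exact max_le (le_add_of_le_of_nonneg (le_posPart _) (posPart_nonneg _))
    (le_add_of_nonneg_of_le (posPart_nonneg _) (le_posPart _))

namespace IsSubmodular

variable {ι : Type*} [DecidableEq ι] {f : (ι → Bool) → ℝ}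

-- Diminishing returns: lowering `a` at `s.piecewise ⊥ x ≤ x` costs at least as much as lowering
-- it at `x`, and these costs telescope.
theorem sum_sub_update_false_le (hf : IsSubmodular f) (x : ι → Bool) (s : Finset ι) :
    ∑ i ∈ s, (f x - f (update x i false)) ≤ f x - f (s.piecewise ⊥ x) := by
  induction s using Finset.induction_on with
  | empty => simp
  | insert a s ha ih =>
    have hsup : s.piecewise ⊥ x ⊔ update x a false = x := by
      ext j
      by_cases hj : j = a
      · subst hj; simp [ha]
      · by_cases hjs : j ∈ s <;> simp [hj, hjs]
    have hinf : s.piecewise ⊥ x ⊓ update x a false = (insert a s).piecewise ⊥ x := by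
      ext j
      by_cases hj : j = a
      · subst hj; simp
      · by_cases hjs : j ∈ s <;> simp [hj, hjs]
    have key := hf (s.piecewise ⊥ x) (update x a false)
    rw [hsup, hinf] at key
    rw [sum_insert ha]
    linarith

theorem sum_sub_update_le (hf : IsSubmodular f) (x : ι → Bool) (b : Bool) (s : Finset ι) :
    ∑ i ∈ s, (f x - f (update x i b)) ≤ f x - f (s.piecewise (fun _ => b) x) := by
  cases b
  · exact hf.sum_sub_update_false_le x s
  · have hupdate : ∀ i, update x i true = (update xᶜ i false)ᶜ := fun i => by
      ext j
      by_cases hj : j = i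
      · subst hj; simp
      · simp [hj]
    have hpiecewise : s.piecewise (fun _ => true) x = (s.piecewise ⊥ xᶜ)ᶜ := by
      ext j
      by_cases hj : j ∈ s <;> simp [hj]
    simpa only [comp_apply, compl_compl, ← hupdate, ← hpiecewise]
      using hf.comp_compl.sum_sub_update_false_le xᶜ s

theorem sum_posPart_sub_update_le (hf : IsSubmodular f) (hf0 : ∀ y, 0 ≤ f y)
    (x : ι → Bool) (b : Bool) (s : Finset ι) :
    ∑ i ∈ s, (f x - f (update x i b))⁺ ≤ f x := by
  rw [sum_posPart_eq_sum_filter]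
  calc _ ≤ f x - f ((s.filter _).piecewise (fun _ => b) x) := hf.sum_sub_update_le x b _
    _ ≤ f x := sub_le_self _ (hf0 _)

end IsSubmodular

theorem submodular_is_two_selfbounding (n : ℕ) (f : (Fin n → Bool) → ℝ)
    (hf01 : ∀ x, f x ∈ Set.Icc (0 : ℝ) 1)
    (hsub : ∀ x y : Fin n → Bool, f (x ⊔ y) + f (x ⊓ y) ≤ f x + f y) :
    SelfBounding n 2 f := by
  have hf : IsSubmodular f := hsub
  have hf0 : ∀ y, 0 ≤ f y := fun y => (hf01 y).1
  intro x
  refine ⟨fun i => ?_, ?_⟩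
  · have := le_min (hf0 (update x i false)) (hf0 (update x i true))
    linarith [(hf01 x).2]
  · calc _ ≤ ∑ i, ((f x - f (update x i false))⁺ + (f x - f (update x i true))⁺) :=
          sum_le_sum fun i _ => sub_min_le_posPart_add_posPart _ _ _
      _ ≤ 2 * f x := by
          rw [sum_add_distrib, two_mul]
          exact add_le_add (hf.sum_posPart_sub_update_le hf0 x false univ)
            (hf.sum_posPart_sub_update_le hf0 x true univ)
end
end

section
/- Let a ≥ 1 be a real number and let f, g: {0,1}^n → ℝ be a-self-bounding functions. Then the pointwise maximum h(x) = max(f(x), g(x)) is also a-self-bounding. -/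
noncomputable section

/-! Both self-bounding conditions at `x` only get weaker when `f` is replaced by a function
lying above it that agrees with it at `x`; at each point, `max f g` is such a function for
whichever of `f`, `g` is larger there. -/

section CoordDrop

variable {ι : Type*} [DecidableEq ι]

def coordDrop (f : (ι → Bool) → ℝ) (x : ι → Bool) (i : ι) : ℝ :=
  f x - min (f (Function.update x i false)) (f (Function.update x i true))

theorem coordDrop_le_of_le_of_eq {f h : (ι → Bool) → ℝ} (hle : f ≤ h) {x : ι → Bool}
    (hx : h x = f x) (i : ι) : coordDrop h x i ≤ coordDrop f x i := by
  unfold coordDrop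
  rw [hx]
  exact sub_le_sub_left (min_le_min (hle _) (hle _)) _

variable [Fintype ι]

def SelfBoundingAt (a : ℝ) (f : (ι → Bool) → ℝ) (x : ι → Bool) : Prop :=
  (∀ i, coordDrop f x i ≤ 1) ∧ ∑ i, coordDrop f x i ≤ a * f x

theorem SelfBoundingAt.of_le_of_eq {a : ℝ} {f h : (ι → Bool) → ℝ} {x : ι → Bool}
    (hf : SelfBoundingAt a f x) (hle : f ≤ h) (hx : h x = f x) : SelfBoundingAt a h x := by
  have hdrop := coordDrop_le_of_le_of_eq hle hx
  refine ⟨fun i => (hdrop i).trans (hf.1 i), ?_⟩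
  calc ∑ i, coordDrop h x i ≤ ∑ i, coordDrop f x i := Finset.sum_le_sum fun i _ => hdrop i
    _ ≤ a * f x := hf.2
    _ = a * h x := by rw [hx]

end CoordDrop

theorem selfBounding_iff_forall_selfBoundingAt {n : ℕ} {a : ℝ} {f : (Fin n → Bool) → ℝ} :
    SelfBounding n a f ↔ ∀ x, SelfBoundingAt a f x :=
  Iff.rfl

theorem selfbounding_max_closed_general (n : ℕ) (a : ℝ)
    (f g : (Fin n → Bool) → ℝ) (hf : SelfBounding n a f) (hg : SelfBounding n a g) :
    SelfBounding n a (fun x => max (f x) (g x)) := by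
  rw [selfBounding_iff_forall_selfBoundingAt] at hf hg ⊢
  intro x
  rcases le_total (g x) (f x) with hgf | hfg
  · exact (hf x).of_le_of_eq (fun y => le_max_left _ _) (max_eq_left hgf)
  · exact (hg x).of_le_of_eq (fun y => le_max_right _ _) (max_eq_right hfg)

theorem selfbounding_max_closed (n : ℕ) (a : ℝ) (ha : 1 ≤ a)
    (f g : (Fin n → Bool) → ℝ) (hf : SelfBounding n a f) (hg : SelfBounding n a g) :
    SelfBounding n a (fun x => max (f x) (g x)) :=
  selfbounding_max_closed_general n a f g hf hg
end
end
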